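/- For every α ∈ (0,1) there exists a constant C = C(α,T) > 0 (not depending on n) such that for every integer n ≥ 2, every x ∈ [0,π], and all 0 ≤ s < t ≤ T, ∫_s^t ∫_0^π |Δ_n G^n_{t−r}(x,z)| dz dr ≤ C |t−s|^{(3/8)α}. -/

import Mathlib

/-!
Since `κ_n` is constant on the grid cells, the `z`-integral of `|Δ_n G^n_ρ(x, ·)|` is a Riemann
sum over the grid `kπ/n`. By Cauchy–Schwarz and the discrete orthogonality of the vectors
`(sin (jkπ/n))_{k<n}`, its square is at most `π Σ_j a_j²`, where
`a_j = λ_{j,n} e^{-λ_{j,n}² ρ} φ_{j,n}(x)`. Jordan's inequality gives `|λ_{j,n}| ≥ 4j²/π²`, and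
`u^γ e^{-2u} ≤ 1` then gives `a_j² ≲ j^{4(1-γ)} ρ^{-γ}`. For `γ = 2 - 3α/4 > 5/4` the series in `j`
converges, so the inner integral is `O(ρ^{3α/8 - 1})` uniformly in `n` and `x`; integrating in
`r` gives `|t - s|^{3α/8}`.
-/

/-- `φ_j(x) = √(2/π)·sin(jx)`. -/
noncomputable def phi (j : ℕ) (x : ℝ) : ℝ := Real.sqrt (2 / Real.pi) * Real.sin (j * x)

/-- `λ_{j,n} = −j²·c_{j,n}` with `c_{j,n} = sin²(jπ/(2n))/(jπ/(2n))²`. -/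
noncomputable def lam (n j : ℕ) : ℝ :=
  -((j : ℝ) ^ 2) * (Real.sin ((j : ℝ) * Real.pi / (2 * n)) ^ 2
    / ((j : ℝ) * Real.pi / (2 * n)) ^ 2)

/-- `κ_n(y) = h⌊y/h⌋` with `h = π/n`. -/
noncomputable def kappa (n : ℕ) (y : ℝ) : ℝ :=
  (Real.pi / n) * (⌊y / (Real.pi / n)⌋ : ℝ)

/-- Piecewise linear interpolant of `φ_j` on the grid `{kπ/n}`. -/
noncomputable def phiI (n j : ℕ) (x : ℝ) : ℝ :=
  phi j (kappa n x) + ((n : ℝ) * x / Real.pi - (⌊x / (Real.pi / n)⌋ : ℝ))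
    * (phi j (kappa n x + Real.pi / n) - phi j (kappa n x))

/-- `Δ_n G^n_t(x,y) = Σ_{j=1}^{n−1} λ_{j,n} e^{−λ_{j,n}²t} φ_{j,n}(x) φ_j(κ_n(y))`. -/
noncomputable def DGn (n : ℕ) (t x y : ℝ) : ℝ :=
  ∑ j ∈ Finset.Icc 1 (n - 1),
    lam n j * Real.exp (-(lam n j) ^ 2 * t) * phiI n j x * phi j (kappa n y)

open Real Finset MeasureTheory

theorem two_mul_sin_half_mul_sum_range_cos (θ : ℝ) (n : ℕ) :
    2 * sin (θ / 2) * ∑ k ∈ range n, cos (k * θ) = sin ((n - 1 / 2) * θ) + sin (θ / 2) := by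
  induction n with
  | zero => simp [show (2 : ℝ)⁻¹ * θ = θ / 2 by ring]
  | succ n ih =>
    rw [sum_range_succ, mul_add, ih, Nat.cast_succ,
      show ((n : ℝ) + 1 - 1 / 2) * θ = n * θ + θ / 2 by ring,
      show ((n : ℝ) - 1 / 2) * θ = n * θ - θ / 2 by ring, sin_add, sin_sub]
    ring

theorem sum_range_cos_mul_pi_div (n m : ℕ) (hm0 : 0 < m) (hm : m < 2 * n) :
    ∑ k ∈ range n, cos (m * k * π / n) = (1 - (-1) ^ m) / 2 := by
  have hn : (0 : ℝ) < n := by exact_mod_cast (show 0 < n by omega)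
  set θ : ℝ := m * π / n
  have hsin : 0 < sin (θ / 2) := by
    have hm' : (m : ℝ) < 2 * n := by exact_mod_cast hm
    apply sin_pos_of_pos_of_lt_pi
    · positivity
    · rw [div_div, div_lt_iff₀ (by positivity)]
      nlinarith [pi_pos]
  have hend : sin ((n - 1 / 2) * θ) = -(-1) ^ m * sin (θ / 2) := by
    rw [show ((n : ℝ) - 1 / 2) * θ = m * π - θ / 2 by simp only [θ]; field_simp,
      sin_nat_mul_pi_sub]
    ring
  have h := two_mul_sin_half_mul_sum_range_cos θ n
  rw [hend] at h
  simp_rw [show ∀ k : ℕ, (m : ℝ) * k * π / n = k * θ by intro k; simp only [θ]; ring]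
  apply mul_left_cancel₀ (mul_pos two_pos hsin).ne'
  rw [h]
  ring

theorem sum_range_sin_mul_sin (n : ℕ) {j j' : ℕ} (hj : j ∈ Icc 1 (n - 1))
    (hj' : j' ∈ Icc 1 (n - 1)) :
    ∑ k ∈ range n, sin (j * k * π / n) * sin (j' * k * π / n)
      = if j = j' then (n : ℝ) / 2 else 0 := by
  wlog hle : j' ≤ j generalizing j j'
  · simp_rw [mul_comm (sin (j * _ * π / n)), eq_comm (a := j)]
    exact this hj' hj (by omega)
  rw [mem_Icc] at hj hj'
  have hprod : ∀ k : ℕ, sin (j * k * π / n) * sin (j' * k * π / n) =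
      (cos ((j - j' : ℕ) * k * π / n) - cos ((j + j' : ℕ) * k * π / n)) / 2 := by
    intro k
    rw [show ((j - j' : ℕ) : ℝ) * k * π / n = j * k * π / n - j' * k * π / n by
        rw [Nat.cast_sub hle]; ring,
      show ((j + j' : ℕ) : ℝ) * k * π / n = j * k * π / n + j' * k * π / n by push_cast; ring,
      cos_sub, cos_add]
    ring
  simp_rw [hprod, ← sum_div, sum_sub_distrib]
  rw [sum_range_cos_mul_pi_div n (j + j') (by omega) (by omega)]
  split_ifs with hjj
  · subst hjj
    simp [Even.neg_one_pow ⟨j, rfl⟩]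
  · rw [sum_range_cos_mul_pi_div n (j - j') (by omega) (by omega),
      show j + j' = j - j' + 2 * j' by omega, pow_add, pow_mul]
    simp

theorem sum_range_sq_sum_mul_phi (n : ℕ) (a : ℕ → ℝ) :
    ∑ k ∈ range n, (∑ j ∈ Icc 1 (n - 1), a j * phi j (k * (π / n))) ^ 2
      = n / π * ∑ j ∈ Icc 1 (n - 1), a j ^ 2 := by
  have hsqrt : sqrt (2 / π) ^ 2 = 2 / π := sq_sqrt (by positivity)
  have hexpand : ∀ k : ℕ, (∑ j ∈ Icc 1 (n - 1), a j * phi j (k * (π / n))) ^ 2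
      = ∑ j ∈ Icc 1 (n - 1), ∑ j' ∈ Icc 1 (n - 1),
          2 / π * a j * a j' * (sin (j * k * π / n) * sin (j' * k * π / n)) := by
    intro k
    rw [sq, sum_mul_sum]
    refine sum_congr rfl fun j _ => sum_congr rfl fun j' _ => ?_
    have harg : ∀ i : ℕ, (i : ℝ) * (k * (π / n)) = i * k * π / n := fun i => by ring
    simp only [phi, harg]
    linear_combination (a j * a j' * sin (j * k * π / n) * sin (j' * k * π / n)) * hsqrt
  simp_rw [hexpand]
  rw [sum_comm]
  refine (sum_congr rfl fun j hj => ?_).trans (mul_sum ..).symm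
  rw [sum_comm, sum_congr rfl fun j' hj' => by rw [← mul_sum, sum_range_sin_mul_sin n hj hj']]
  simp only [mul_ite, mul_zero, sum_ite_eq, if_pos hj]
  field_simp

theorem abs_phi_le (j : ℕ) (y : ℝ) : |phi j y| ≤ sqrt (2 / π) := by
  rw [phi, abs_mul, abs_of_nonneg (sqrt_nonneg _)]
  exact mul_le_of_le_one_right (sqrt_nonneg _) (abs_sin_le_one _)

theorem phiI_eq_convex_combination (n j : ℕ) (hn : 0 < n) (x : ℝ) :
    phiI n j x = (1 - Int.fract (x / (π / n))) * phi j (kappa n x)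
      + Int.fract (x / (π / n)) * phi j (kappa n x + π / n) := by
  rw [phiI, Int.fract, show (n : ℝ) * x / π = x / (π / n) by field_simp]
  ring

theorem abs_phiI_le (n j : ℕ) (hn : 0 < n) (x : ℝ) : |phiI n j x| ≤ sqrt (2 / π) := by
  rw [phiI_eq_convex_combination n j hn]
  set θ := Int.fract (x / (π / n))
  have hθ0 : 0 ≤ θ := Int.fract_nonneg _
  have hθ1 : θ ≤ 1 := (Int.fract_lt_one _).le
  calc _ ≤ (1 - θ) * |phi j (kappa n x)| + θ * |phi j (kappa n x + π / n)| := by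
        refine (abs_add_le _ _).trans_eq ?_
        rw [abs_mul, abs_mul, abs_of_nonneg (sub_nonneg.2 hθ1), abs_of_nonneg hθ0]
    _ ≤ (1 - θ) * sqrt (2 / π) + θ * sqrt (2 / π) := by
        gcongr <;> apply abs_phi_le
    _ = sqrt (2 / π) := by ring

theorem kappa_eq_of_mem_Ico {n : ℕ} (hn : 0 < n) (k : ℕ) {z : ℝ}
    (hz : z ∈ Set.Ico (k * (π / n)) ((k + 1) * (π / n))) : kappa n z = k * (π / n) := by
  have hh : 0 < π / n := by positivity
  have hfloor : ⌊z / (π / n)⌋ = k := by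
    rw [Int.floor_eq_iff, le_div_iff₀ hh, div_lt_iff₀ hh]
    exact_mod_cast hz
  rw [kappa, hfloor, Int.cast_natCast, mul_comm]

theorem integral_comp_kappa {n : ℕ} (hn : 0 < n) (G : ℝ → ℝ) :
    ∫ z in (0 : ℝ)..π, G (kappa n z) = π / n * ∑ k ∈ range n, G (k * (π / n)) := by
  have hh : 0 < π / n := by positivity
  set a : ℕ → ℝ := fun k => k * (π / n)
  have hle : ∀ k, a k ≤ a (k + 1) := fun k => by simp only [a]; push_cast; nlinarith
  have hconst : ∀ k, Set.EqOn (fun z => G (kappa n z)) (fun _ => G (a k))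
      (Set.Ioo (a k) (a (k + 1))) := fun k z hz =>
    congrArg G (kappa_eq_of_mem_Ico hn k (by simpa [a] using Set.Ioo_subset_Ico_self hz))
  have hint : ∀ k < n, IntervalIntegrable (fun z => G (kappa n z)) volume (a k) (a (k + 1)) :=
    fun k _ => (intervalIntegrable_iff_integrableOn_Ioo_of_le (hle k)).2 <|
      (integrableOn_const measure_Ioo_lt_top.ne).congr_fun
        (hconst k).symm measurableSet_Ioo
  have hcell : ∀ k, ∫ z in (a k)..(a (k + 1)), G (kappa n z) = π / n * G (a k) := fun k => by
    rw [intervalIntegral.integral_of_le (hle k), integral_Ioc_eq_integral_Ioo,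
      setIntegral_congr_fun measurableSet_Ioo (hconst k), setIntegral_const, smul_eq_mul,
      Real.volume_real_Ioo_of_le (hle k)]
    simp only [a]; push_cast; ring
  have h0 : a 0 = 0 := by simp [a]
  have hπ : a n = π := by simp only [a]; field_simp
  have hsum := intervalIntegral.sum_integral_adjacent_intervals hint
  rw [h0, hπ] at hsum
  rw [← hsum, mul_sum]
  exact sum_congr rfl fun k _ => hcell k

theorem mul_sq_le_neg_lam {n j : ℕ} (hj : j ∈ Icc 1 (n - 1)) : 4 / π ^ 2 * j ^ 2 ≤ -lam n j := by
  rw [mem_Icc] at hj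
  have hj0 : (0 : ℝ) < j := by exact_mod_cast hj.1
  have hn0 : (0 : ℝ) < n := by exact_mod_cast (show 0 < n by omega)
  have hjn : (j : ℝ) ≤ n := by exact_mod_cast (show j ≤ n by omega)
  set θ : ℝ := j * π / (2 * n)
  have hθ0 : 0 < θ := by positivity
  have hθ : θ ≤ π / 2 := by
    rw [div_le_div_iff₀ (by positivity) two_pos]
    nlinarith [pi_pos]
  have hjordan : 2 / π * θ ≤ sin θ := mul_le_sin hθ0.le hθ
  have hratio : 4 / π ^ 2 ≤ sin θ ^ 2 / θ ^ 2 := by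
    rw [le_div_iff₀ (by positivity), show 4 / π ^ 2 * θ ^ 2 = (2 / π * θ) ^ 2 by ring]
    exact pow_le_pow_left₀ (by positivity) hjordan 2
  rw [lam, neg_mul, neg_neg, mul_comm]
  exact mul_le_mul_of_nonneg_left hratio (by positivity)

theorem rpow_mul_exp_neg_two_mul_le_one {u γ : ℝ} (hu : 0 ≤ u) (hγ0 : 0 ≤ γ) (hγ2 : γ ≤ 2) :
    u ^ γ * exp (-(2 * u)) ≤ 1 := by
  have hpow : u ^ γ ≤ exp (2 * u) :=
    calc u ^ γ ≤ exp u ^ γ := rpow_le_rpow hu ((le_add_of_nonneg_right zero_le_one).trans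
          (add_one_le_exp u)) hγ0
      _ = exp (γ * u) := by rw [← exp_mul, mul_comm]
      _ ≤ exp (2 * u) := exp_le_exp.2 (mul_le_mul_of_nonneg_right hγ2 hu)
  calc u ^ γ * exp (-(2 * u)) ≤ exp (2 * u) * exp (-(2 * u)) := by gcongr
    _ = 1 := by rw [← exp_add, add_neg_cancel, exp_zero]

theorem sq_mul_exp_neg_sq_mul_le {c ρ γ : ℝ} (hc : c ≠ 0) (hρ : 0 < ρ) (hγ0 : 0 ≤ γ)
    (hγ2 : γ ≤ 2) : (c * exp (-c ^ 2 * ρ)) ^ 2 ≤ (c ^ 2) ^ (1 - γ) * ρ ^ (-γ) := by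
  have hc2 : 0 < c ^ 2 := by positivity
  have hsplit : (c * exp (-c ^ 2 * ρ)) ^ 2
      = (c ^ 2) ^ (1 - γ) * ρ ^ (-γ) * ((c ^ 2 * ρ) ^ γ * exp (-(2 * (c ^ 2 * ρ)))) := by
    have hexp : exp (-c ^ 2 * ρ) ^ 2 = exp (-(2 * (c ^ 2 * ρ))) := by
      rw [sq, ← exp_add]; ring_nf
    rw [mul_rpow hc2.le hρ.le, mul_pow, hexp]
    have hc : (c ^ 2) ^ (1 - γ) * (c ^ 2) ^ γ = c ^ 2 := by
      rw [← rpow_add hc2, sub_add_cancel, rpow_one]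
    have hρ' : ρ ^ (-γ) * ρ ^ γ = 1 := by rw [← rpow_add hρ, neg_add_cancel, rpow_zero]
    linear_combination (exp (-(2 * (c ^ 2 * ρ))) * (ρ ^ (-γ) * ρ ^ γ) * hc.symm
      + exp (-(2 * (c ^ 2 * ρ))) * c ^ 2 * hρ'.symm)
  rw [hsplit]
  exact mul_le_of_le_one_right (by positivity)
    (rpow_mul_exp_neg_two_mul_le_one (by positivity) hγ0 hγ2)

noncomputable def DGnCoeff (n j : ℕ) (ρ x : ℝ) : ℝ :=
  lam n j * exp (-(lam n j) ^ 2 * ρ) * phiI n j x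

theorem DGnCoeff_sq_le {n j : ℕ} (hj : j ∈ Icc 1 (n - 1)) (x : ℝ) {ρ γ : ℝ} (hρ : 0 < ρ)
    (hγ1 : 1 ≤ γ) (hγ2 : γ ≤ 2) :
    DGnCoeff n j ρ x ^ 2 ≤ 2 / π * ((4 / π ^ 2) ^ 2) ^ (1 - γ) * j ^ (4 * (1 - γ)) * ρ ^ (-γ) := by
  have hlam := mul_sq_le_neg_lam hj
  have hj0 : (0 : ℝ) < j := by exact_mod_cast (mem_Icc.1 hj).1
  have hn : 0 < n := by have := mem_Icc.1 hj; omega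
  have hlam_sq : (4 / π ^ 2) ^ 2 * (j : ℝ) ^ 4 ≤ lam n j ^ 2 := by
    rw [← neg_sq (lam n j), show (4 / π ^ 2) ^ 2 * (j : ℝ) ^ 4 = (4 / π ^ 2 * j ^ 2) ^ 2 by ring]
    exact pow_le_pow_left₀ (by positivity) hlam 2
  have hphiI : phiI n j x ^ 2 ≤ 2 / π := by
    rw [← sq_abs, ← sq_sqrt (show 0 ≤ 2 / π by positivity)]
    exact pow_le_pow_left₀ (abs_nonneg _) (abs_phiI_le n j hn x) 2
  have hrpow : (lam n j ^ 2) ^ (1 - γ) ≤ ((4 / π ^ 2) ^ 2) ^ (1 - γ) * j ^ (4 * (1 - γ)) := by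
    rw [show (4 : ℝ) * (1 - γ) = (4 : ℕ) * (1 - γ) by norm_num, rpow_natCast_mul hj0.le,
      ← mul_rpow (by positivity) (by positivity)]
    exact rpow_le_rpow_of_nonpos (by positivity) hlam_sq (by linarith)
  calc DGnCoeff n j ρ x ^ 2 = (lam n j * exp (-lam n j ^ 2 * ρ)) ^ 2 * phiI n j x ^ 2 := by
        rw [DGnCoeff, mul_pow]
    _ ≤ (lam n j ^ 2) ^ (1 - γ) * ρ ^ (-γ) * (2 / π) := by
        gcongr
        have hlam0 : lam n j < 0 := by linarith [show 0 < 4 / π ^ 2 * (j : ℝ) ^ 2 by positivity]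
        exact sq_mul_exp_neg_sq_mul_le hlam0.ne hρ (by linarith) hγ2
    _ ≤ ((4 / π ^ 2) ^ 2) ^ (1 - γ) * j ^ (4 * (1 - γ)) * ρ ^ (-γ) * (2 / π) := by gcongr
    _ = _ := by ring

theorem integral_abs_DGn_eq {n : ℕ} (hn : 0 < n) (ρ x : ℝ) :
    ∫ z in (0 : ℝ)..π, |DGn n ρ x z|
      = π / n * ∑ k ∈ range n, |∑ j ∈ Icc 1 (n - 1), DGnCoeff n j ρ x * phi j (k * (π / n))| :=
  integral_comp_kappa hn fun y => |∑ j ∈ Icc 1 (n - 1), DGnCoeff n j ρ x * phi j y|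

theorem continuous_integral_abs_DGn {n : ℕ} (hn : 0 < n) (x : ℝ) :
    Continuous fun ρ => ∫ z in (0 : ℝ)..π, |DGn n ρ x z| := by
  simp_rw [integral_abs_DGn_eq hn, DGnCoeff]
  fun_prop

theorem sq_integral_abs_DGn_le {n : ℕ} (hn : 0 < n) (ρ x : ℝ) :
    (∫ z in (0 : ℝ)..π, |DGn n ρ x z|) ^ 2 ≤ π * ∑ j ∈ Icc 1 (n - 1), DGnCoeff n j ρ x ^ 2 := by
  have hn' : (0 : ℝ) < n := by exact_mod_cast hn
  have hcs := sq_sum_le_card_mul_sum_sq (s := range n)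
    (f := fun k : ℕ => |∑ j ∈ Icc 1 (n - 1), DGnCoeff n j ρ x * phi j (k * (π / n))|)
  simp only [card_range, sq_abs, sum_range_sq_sum_mul_phi] at hcs
  rw [integral_abs_DGn_eq hn, mul_pow]
  calc _ ≤ (π / n) ^ 2 * (n * (n / π * ∑ j ∈ Icc 1 (n - 1), DGnCoeff n j ρ x ^ 2)) := by gcongr
    _ = _ := by field_simp

theorem exists_integral_abs_DGn_le {γ : ℝ} (hγ1 : 5 / 4 < γ) (hγ2 : γ ≤ 2) :
    ∃ C, 0 ≤ C ∧ ∀ n : ℕ, 0 < n → ∀ x ρ : ℝ, 0 < ρ →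
      ∫ z in (0 : ℝ)..π, |DGn n ρ x z| ≤ C * ρ ^ (-γ / 2) := by
  have hsum : Summable fun j : ℕ => (j : ℝ) ^ (4 * (1 - γ)) :=
    summable_nat_rpow.2 (by linarith)
  set B := 2 * ((4 / π ^ 2) ^ 2) ^ (1 - γ) * ∑' j : ℕ, (j : ℝ) ^ (4 * (1 - γ))
  refine ⟨sqrt B, sqrt_nonneg _, fun n hn x ρ hρ => ?_⟩
  have hsq : (∫ z in (0 : ℝ)..π, |DGn n ρ x z|) ^ 2 ≤ B * ρ ^ (-γ) :=
    calc _ ≤ π * ∑ j ∈ Icc 1 (n - 1), DGnCoeff n j ρ x ^ 2 := sq_integral_abs_DGn_le hn ρ x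
      _ ≤ π * ∑ j ∈ Icc 1 (n - 1),
            2 / π * ((4 / π ^ 2) ^ 2) ^ (1 - γ) * j ^ (4 * (1 - γ)) * ρ ^ (-γ) := by
          gcongr with j hj
          exact DGnCoeff_sq_le hj x hρ (by linarith) hγ2
      _ = 2 * ((4 / π ^ 2) ^ 2) ^ (1 - γ) * (∑ j ∈ Icc 1 (n - 1), (j : ℝ) ^ (4 * (1 - γ)))
            * ρ ^ (-γ) := by
          rw [← sum_mul, ← mul_sum]; field_simp
      _ ≤ B * ρ ^ (-γ) := by
          gcongr ?_ * _
          exact mul_le_mul_of_nonneg_left (hsum.sum_le_tsum _ fun j _ => by positivity)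
            (by positivity)
  calc _ ≤ sqrt (B * ρ ^ (-γ)) := (le_abs_self _).trans (abs_le_sqrt hsq)
    _ = sqrt B * ρ ^ (-γ / 2) := by
        rw [sqrt_mul' _ (by positivity), sqrt_eq_rpow (ρ ^ _), ← rpow_mul hρ.le]
        ring_nf

theorem integral_le_of_le_mul_rpow_sub {f : ℝ → ℝ} {C e s t : ℝ} (he : 0 < e) (hst : s ≤ t)
    (hf : IntervalIntegrable f volume s t)
    (hbound : ∀ r ∈ Set.Ioo s t, f r ≤ C * (t - r) ^ (e - 1)) :
    ∫ r in s..t, f r ≤ C / e * (t - s) ^ e := by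
  have hint : IntervalIntegrable (fun r => C * (t - r) ^ (e - 1)) volume s t := by
    have := (intervalIntegral.intervalIntegrable_rpow' (a := t - s) (b := t - t)
      (show -1 < e - 1 by linarith)).comp_sub_left t
    simpa using this.const_mul C
  calc _ ≤ ∫ r in s..t, C * (t - r) ^ (e - 1) :=
        intervalIntegral.integral_mono_on_of_le_Ioo hst hf hint hbound
    _ = C / e * (t - s) ^ e := by
        rw [intervalIntegral.integral_const_mul,
          intervalIntegral.integral_comp_sub_left (fun u => u ^ (e - 1)),
          integral_rpow (Or.inl (by linarith)), sub_self, sub_add_cancel, zero_rpow he.ne']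
        ring

theorem stmt13_general (T : ℝ) (α : ℝ) (hα : α ∈ Set.Ioo (0 : ℝ) 1) :
    ∃ C : ℝ, 0 < C ∧ ∀ n : ℕ, 2 ≤ n → ∀ x ∈ Set.Icc (0 : ℝ) Real.pi,
      ∀ s t : ℝ, 0 ≤ s → s < t → t ≤ T →
      (∫ r in s..t, ∫ z in (0 : ℝ)..Real.pi, |DGn n (t - r) x z|)
        ≤ C * |t - s| ^ ((3 / 8) * α) := by
  obtain ⟨hα0, hα1⟩ := hα
  obtain ⟨C, hC0, hC⟩ := exists_integral_abs_DGn_le (γ := 2 - 3 / 4 * α) (by linarith) (by linarith)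
  refine ⟨C / (3 / 8 * α) + 1, by positivity, fun n hn x _ s t _ hst _ => ?_⟩
  have hcont : Continuous fun r => ∫ z in (0 : ℝ)..π, |DGn n (t - r) x z| :=
    (continuous_integral_abs_DGn (by omega) x).comp (continuous_const.sub continuous_id)
  calc _ ≤ C / (3 / 8 * α) * (t - s) ^ (3 / 8 * α) := by
        refine integral_le_of_le_mul_rpow_sub (by positivity) hst.le (hcont.intervalIntegrable _ _)
          fun r hr => ?_
        convert hC n (by omega) x (t - r) (by linarith [hr.2]) using 3
        ring
    _ ≤ _ := by
        rw [abs_of_pos (sub_pos.2 hst)]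
        gcongr
        linarith

/-- For every `α ∈ (0,1)` there is `C = C(α,T) > 0` (independent of `n`) such that for
every `n ≥ 2`, `x ∈ [0,π]`, `0 ≤ s < t ≤ T`:
`∫_s^t ∫_0^π |Δ_n G^n_{t−r}(x,z)| dz dr ≤ C|t−s|^{(3/8)α}`. -/
theorem stmt13 (T : ℝ) (hT : 0 < T) (α : ℝ) (hα : α ∈ Set.Ioo (0 : ℝ) 1) :
    ∃ C : ℝ, 0 < C ∧ ∀ n : ℕ, 2 ≤ n → ∀ x ∈ Set.Icc (0 : ℝ) Real.pi,
      ∀ s t : ℝ, 0 ≤ s → s < t → t ≤ T →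
      (∫ r in s..t, ∫ z in (0 : ℝ)..Real.pi, |DGn n (t - r) x z|)
        ≤ C * |t - s| ^ ((3 / 8) * α) :=
  stmt13_general T α hα
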